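/- Let A be a unital C*-algebra, μ a state, and a ∈ A normal. For any Lipschitz function F on the spectrum of a, σ^μ(F(a)) ≤ Lip(F) · σ^μ(a), where F(a) is given by the continuous functional calculus. -/

import Mathlib

/-! For `y` in the spectrum of `a`, the Lipschitz bound `|F x - F y|² ≤ K² |x - y|²` on the
spectrum and positivity of the functional calculus give `μ |F(a) - F y|² ≤ K² μ |a - y|²`.
Both sides are continuous in `y`, so the functional calculus can be applied once more, in the
variable `y`, followed by `μ`: this averages the inequality over a second, independent copy of
`a`. By the parallel-axis identity `μ |b - z|² = Var b + |z - μ b|²` each side averages to twice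
a variance, hence `Var F(a) ≤ K² Var a`; for normal `b`, `σ^μ(b)² = Var b`. -/

open scoped ComplexOrder

/-- The standard deviation σ^μ(a) = max(‖a − μ(a)1‖_μ, ‖a* − conj(μ(a))1‖_μ) with
respect to a state μ on a unital C*-algebra, where ‖c‖_μ = μ(c*c)^{1/2}. -/
noncomputable def stdDev {A : Type*} [CStarAlgebra A] (μ : A →ₗ[ℂ] ℂ) (a : A) : ℝ :=
  max (Real.sqrt (μ (star (a - μ a • 1) * (a - μ a • 1))).re)
    (Real.sqrt (μ (star (star a - (starRingEnd ℂ) (μ a) • 1) *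
      (star a - (starRingEnd ℂ) (μ a) • 1))).re)

lemma star_mul_self_cfc_sub_smul_one {A : Type*} [CStarAlgebra A] {a : A} [IsStarNormal a]
    {g : ℂ → ℂ} (hg : ContinuousOn g (spectrum ℂ a)) (z : ℂ) :
    star (cfc g a - z • 1) * (cfc g a - z • 1) = cfc (fun x ↦ star (g x - z) * (g x - z)) a := by
  rw [cfc_mul (fun x ↦ star (g x - z)) (fun x ↦ g x - z) a, cfc_star, cfc_sub g (fun _ ↦ z) a,
    cfc_const z a, Algebra.algebraMap_eq_smul_one]

lemma isStarNormal_sub_smul_one {R A : Type*} [CommSemiring R] [StarRing R] [Ring A]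
    [StarRing A] [Module R A] [StarModule R A] [IsScalarTower R A A] [SMulCommClass R A A]
    (b : A) [IsStarNormal b] (z : R) : IsStarNormal (b - z • 1) :=
  Commute.isStarNormal_sub <| by simpa using (Commute.one_right b).smul_right (star z)

namespace PositiveLinearMap

variable {A : Type*} [CStarAlgebra A] [PartialOrder A] (φ : A →ₚ[ℂ] ℂ)

noncomputable def secondMoment (b : A) (z : ℂ) : ℂ := φ (star (b - z • 1) * (b - z • 1))

noncomputable def variance (b : A) : ℂ := φ.secondMoment b (φ b)

lemma stdDev_eq_sqrt_variance (b : A) [IsStarNormal b] :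
    stdDev φ.toLinearMap b = √(φ.variance b).re := by
  have hstar : star b - starRingEnd ℂ (φ b) • 1 = star (b - φ b • 1) := by
    simp [star_sub, star_smul]
  rw [stdDev, coe_toLinearMap, hstar, star_star,
    ← (isStarNormal_sub_smul_one b (φ b)).star_comm_self.eq, max_self]
  rfl

variable [StarOrderedRing A]

lemma continuous_secondMoment (b : A) : Continuous (φ.secondMoment b) := by
  unfold secondMoment
  fun_prop

lemma secondMoment_eq_variance_add (hφ : φ 1 = 1) (b : A) (z : ℂ) :
    φ.secondMoment b z = φ.variance b + star (z - φ b) * (z - φ b) := by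
  set u := b - φ b • 1
  set c := z - φ b
  have hu : φ u = 0 := by simp [u, hφ]
  have hb : b - z • 1 = u - c • 1 := by
    simp only [u, c, sub_smul]
    abel
  have expand : star (u - c • 1) * (u - c • 1)
      = star u * u - c • star u - star c • u + (c * star c) • 1 := by
    simp only [star_sub, star_smul, star_one, sub_mul, mul_sub, smul_sub, smul_mul_assoc,
      mul_smul_comm, smul_smul, mul_one, one_mul]
    abel
  rw [secondMoment, hb, expand, show φ.variance b = φ (star u * u) from rfl]
  simp [hu, map_star, hφ, mul_comm]

variable {a : A} [IsStarNormal a]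

lemma secondMoment_cfc_le_of_norm_le {g h : ℂ → ℂ} (hg : ContinuousOn g (spectrum ℂ a))
    (hh : ContinuousOn h (spectrum ℂ a)) {w z : ℂ} {K : ℝ}
    (hgh : ∀ x ∈ spectrum ℂ a, ‖g x - w‖ ≤ K * ‖h x - z‖) :
    φ.secondMoment (cfc g a) w ≤ (K : ℂ) ^ 2 * φ.secondMoment (cfc h a) z := by
  rw [secondMoment, secondMoment, star_mul_self_cfc_sub_smul_one hg,
    star_mul_self_cfc_sub_smul_one hh, ← smul_eq_mul, ← map_smul,
    ← cfc_const_mul _ (fun x ↦ star (h x - z) * (h x - z)) a]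
  gcongr
  refine cfc_mono fun x hx ↦ ?_
  simp only [Complex.star_def, Complex.conj_mul']
  norm_cast
  calc ‖g x - w‖ ^ 2 ≤ (K * ‖h x - z‖) ^ 2 := by gcongr; exact hgh x hx
    _ = K ^ 2 * ‖h x - z‖ ^ 2 := by ring

lemma map_cfc_secondMoment_comp (hφ : φ 1 = 1) {g : ℂ → ℂ}
    (hg : ContinuousOn g (spectrum ℂ a)) :
    φ (cfc (fun y ↦ φ.secondMoment (cfc g a) (g y)) a) = 2 * φ.variance (cfc g a) := by
  simp_rw [φ.secondMoment_eq_variance_add hφ]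
  rw [cfc_const_add _ _ a, ← star_mul_self_cfc_sub_smul_one hg, map_add,
    Algebra.algebraMap_eq_smul_one, map_smul, hφ, smul_eq_mul, mul_one, two_mul]
  rfl

theorem variance_cfc_le_of_lipschitzOnWith (hφ : φ 1 = 1) {F : ℂ → ℂ} {K : NNReal}
    (hF : LipschitzOnWith K F (spectrum ℂ a)) :
    φ.variance (cfc F a) ≤ (K : ℂ) ^ 2 * φ.variance a := by
  have hFc := hF.continuousOn
  have pointwise : ∀ y ∈ spectrum ℂ a,
      φ.secondMoment (cfc F a) (F y) ≤ (K : ℂ) ^ 2 * φ.secondMoment a y := fun y hy ↦ by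
    simpa only [cfc_id ℂ a] using φ.secondMoment_cfc_le_of_norm_le hFc continuousOn_id
      fun x hx ↦ by simpa only [dist_eq_norm, id] using hF.dist_le_mul x hx y hy
  have averaged := OrderHomClass.mono φ <| cfc_mono pointwise
    ((φ.continuous_secondMoment _).comp_continuousOn hFc)
    (continuousOn_const.mul (φ.continuous_secondMoment a).continuousOn)
  have averaged_id := φ.map_cfc_secondMoment_comp hφ (a := a) (g := id) continuousOn_id
  simp only [cfc_id ℂ a, id] at averaged_id
  rw [cfc_const_mul _ _ a (φ.continuous_secondMoment a).continuousOn, map_smul, smul_eq_mul,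
    φ.map_cfc_secondMoment_comp hφ hFc, averaged_id, mul_left_comm] at averaged
  exact le_of_mul_le_mul_left averaged two_pos

end PositiveLinearMap

/-- Markov property of the standard deviation: if a is a normal element of a unital
C*-algebra A with state μ, and F is Lipschitz with constant K on the spectrum of a,
then σ^μ(F(a)) ≤ K·σ^μ(a), where F(a) is the continuous functional calculus. -/
theorem stdDev_cfc_lipschitz {A : Type*} [CStarAlgebra A]
    (μ : A →ₗ[ℂ] ℂ) (hpos : ∀ a : A, 0 ≤ μ (star a * a)) (hone : μ 1 = 1)
    (a : A) (ha : IsStarNormal a) (F : ℂ → ℂ) (K : NNReal)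
    (hF : LipschitzOnWith K F (spectrum ℂ a)) :
    stdDev μ (cfc F a) ≤ K * stdDev μ a := by
  let _ := CStarAlgebra.spectralOrder A
  have _ := CStarAlgebra.spectralOrderedRing A
  let φ : A →ₚ[ℂ] ℂ := .mk₀ μ fun x hx ↦ by
    obtain ⟨s, rfl⟩ := CStarAlgebra.nonneg_iff_eq_star_mul_self.mp hx
    exact hpos s
  change stdDev φ.toLinearMap (cfc F a) ≤ K * stdDev φ.toLinearMap a
  have hvar := (Complex.le_def.mp (φ.variance_cfc_le_of_lipschitzOnWith hone hF)).1
  rw [φ.stdDev_eq_sqrt_variance, φ.stdDev_eq_sqrt_variance, ← Real.sqrt_sq K.coe_nonneg,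
    ← Real.sqrt_mul (sq_nonneg _)]
  gcongr
  simpa [← Complex.ofReal_pow] using hvar
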